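/- arXiv:math/0405576 — 8 statements merged into one kernel-verified Lean document; each statement's English description precedes it below -/
import Mathlib

section
/- For all x, y in 𝔤, the set {(α,γ) ∈ J × (I∖J) : x_α^γ · y_γ^α ≠ 0} is finite, and likewise the set {(α,γ) ∈ (I∖J) × J : x_α^γ · y_γ^α ≠ 0} is finite; hence both sums in the definition of c(x,y) have only finitely many nonzero terms and c(x,y) is well defined. -/
/-! Each nonzero product `x_α^γ y_γ^α` with `α ∈ J`, `γ ∉ J` forces `y·w_α` to have a component
outside `span {w_β : β ∈ J}`, which happens for only finitely many `α`, and each `y·w_α` has only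
finitely many nonzero coordinates `γ`. The other set is handled symmetrically, with `x` and `γ`. -/

theorem Module.Basis.finite_setOf_mem_notMem_repr_ne_zero {R M I : Type*} [Semiring R]
    [AddCommMonoid M] [Module R M] (b : Module.Basis I R M) (J : Set I) (f : I → M)
    (hf : {α ∈ J | f α ∉ Submodule.span R (b '' J)}.Finite) :
    {p : I × I | p.1 ∈ J ∧ p.2 ∉ J ∧ b.repr (f p.1) p.2 ≠ 0}.Finite := by
  refine (hf.biUnion fun α _ => (Set.finite_singleton α).prod
    (b.repr (f α)).support.finite_toSet).subset ?_
  rintro ⟨α, γ⟩ ⟨hα, hγ, hne⟩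
  have hα_leaves : f α ∉ Submodule.span R (b '' J) := fun hspan =>
    hγ (b.mem_span_image.1 hspan (Finsupp.mem_support_iff.2 hne))
  exact Set.mem_biUnion ⟨hα, hα_leaves⟩ ⟨rfl, Finsupp.mem_support_iff.2 hne⟩

theorem stmt0_general (K : Type*) [Field K]
    (L : Type*) [LieRing L]
    (W : Type*) [AddCommGroup W] [Module K W] [LieRingModule L W]
    (I : Type*) (b : Module.Basis I K W) (J : Set I)
    (hJ : ∀ x : L, {α ∈ J | ⁅x, b α⁆ ∉ Submodule.span K (⇑b '' J)}.Finite)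
    (x y : L) :
    {p : I × I | p.1 ∈ J ∧ p.2 ∉ J ∧
        b.repr ⁅x, b p.2⁆ p.1 * b.repr ⁅y, b p.1⁆ p.2 ≠ 0}.Finite ∧
    {p : I × I | p.1 ∉ J ∧ p.2 ∈ J ∧
        b.repr ⁅x, b p.2⁆ p.1 * b.repr ⁅y, b p.1⁆ p.2 ≠ 0}.Finite := by
  constructor
  · refine (b.finite_setOf_mem_notMem_repr_ne_zero J (fun α => ⁅y, b α⁆) (hJ y)).subset ?_
    rintro ⟨α, γ⟩ ⟨hα, hγ, hne⟩
    exact ⟨hα, hγ, right_ne_zero_of_mul hne⟩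
  · refine ((b.finite_setOf_mem_notMem_repr_ne_zero J (fun γ => ⁅x, b γ⁆) (hJ x)).preimage
      Prod.swap_injective.injOn).subset ?_
    rintro ⟨α, γ⟩ ⟨hα, hγ, hne⟩
    exact ⟨hγ, hα, left_ne_zero_of_mul hne⟩

/-- For all `x, y ∈ 𝔤`, the set
`{(α,γ) ∈ J × (I∖J) : x_α^γ · y_γ^α ≠ 0}` is finite, and likewise the set
`{(α,γ) ∈ (I∖J) × J : x_α^γ · y_γ^α ≠ 0}` is finite, where the matrix
coefficients are given by `x_γ^α = (b.repr ⁅x, b α⁆) γ`. -/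
theorem stmt0 (K : Type*) [Field K] [CharZero K]
    (L : Type*) [LieRing L] [LieAlgebra K L]
    (W : Type*) [AddCommGroup W] [Module K W] [LieRingModule L W] [LieModule K L W]
    (I : Type*) (b : Module.Basis I K W) (J : Set I)
    (hJ : ∀ x : L, {α ∈ J | ⁅x, b α⁆ ∉ Submodule.span K (⇑b '' J)}.Finite)
    (x y : L) :
    {p : I × I | p.1 ∈ J ∧ p.2 ∉ J ∧
        b.repr ⁅x, b p.2⁆ p.1 * b.repr ⁅y, b p.1⁆ p.2 ≠ 0}.Finite ∧
    {p : I × I | p.1 ∉ J ∧ p.2 ∈ J ∧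
        b.repr ⁅x, b p.2⁆ p.1 * b.repr ⁅y, b p.1⁆ p.2 ≠ 0}.Finite :=
  stmt0_general K L W I b J hJ x y
end

section
/- The bilinear form c is a Lie algebra 2-cocycle on 𝔤 with values in K: for all x, y, z ∈ 𝔤, c(x,y) = −c(y,x) and c(x,[y,z]) + c(y,[z,x]) + c(z,[x,y]) = 0. Hence c determines a cohomology class in H²(𝔤; K). -/
/-!
Write `χ` for the indicator of `J`. Then `c(x,y) = Σ_{α,β} (χ α - χ β) x_α^β y_β^α`, and every
sum that occurs has finitely many nonzero terms because each of its terms contains an entry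
`x_γ^α` with `α ∈ J`, `γ ∉ J`, of which there are finitely many. Antisymmetry is the swap
`α ↔ β`. Expanding `[y,z]_β^α = Σ_γ (y_β^γ z_γ^α - z_β^γ y_γ^α)` writes `c(x,[y,z])` as a
difference of sums of `(χ α - χ β) x_α^β y_β^γ z_γ^α` over triples; rotating `(α, β, γ)` brings
the cyclic sum over `x, y, z` to one such sum with weight
`(χ α - χ β) + (χ β - χ γ) + (χ γ - χ α) = 0`.
-/

open scoped Classical in
/-- The 2-cocycle `c(x,y) = Σ_{α∈J, γ∈I∖J} x_α^γ y_γ^α − Σ_{α∈I∖J, γ∈J} x_α^γ y_γ^α`,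
where `x_γ^α = (b.repr ⁅x, b α⁆) γ` and the (possibly infinite) sums are taken as
finite sums over their finitely many nonzero terms (`finsum`). -/
noncomputable def fockCocycle {K : Type*} [Field K] {L : Type*} [LieRing L] [LieAlgebra K L]
    {W : Type*} [AddCommGroup W] [Module K W] [LieRingModule L W] [LieModule K L W]
    {I : Type*} (b : Module.Basis I K W) (J : Set I) (x y : L) : K :=
  (∑ᶠ p : I × I, if p.1 ∈ J ∧ p.2 ∉ J then
      b.repr ⁅x, b p.2⁆ p.1 * b.repr ⁅y, b p.1⁆ p.2 else 0)
  - (∑ᶠ p : I × I, if p.1 ∉ J ∧ p.2 ∈ J then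
      b.repr ⁅x, b p.2⁆ p.1 * b.repr ⁅y, b p.1⁆ p.2 else 0)

open Function

section FockCocycle

variable {K : Type*} [Field K] {L : Type*} [LieRing L]
  {W : Type*} [AddCommGroup W] [Module K W] [LieRingModule L W]
  {I : Type*} (b : Module.Basis I K W) (J : Set I)

variable (L) in
def IsAlmostInvariant : Prop :=
  ∀ x : L, {α ∈ J | ⁅x, b α⁆ ∉ Submodule.span K (⇑b '' J)}.Finite

/-- `lieMatrix b x i j` is the coefficient `x_i^j` of `w_i` in `x • w_j`. -/
noncomputable def lieMatrix (x : L) (i j : I) : K := b.repr ⁅x, b j⁆ i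

lemma hasFiniteSupport_lieMatrix_col (x : L) (j : I) :
    HasFiniteSupport fun i => lieMatrix b x i j :=
  (b.repr ⁅x, b j⁆).hasFiniteSupport

lemma finite_lieMatrix_support_compl_prod
    (hJ : IsAlmostInvariant L b J) (x : L) :
    {p ∈ Jᶜ ×ˢ J | lieMatrix b x p.1 p.2 ≠ 0}.Finite := by
  refine ((hJ x).biUnion fun j _ => (hasFiniteSupport_lieMatrix_col b x j).image (·, j)).subset ?_
  rintro ⟨i, j⟩ ⟨⟨hi, hj⟩, hx⟩
  simp only [Set.mem_iUnion]
  exact ⟨j, ⟨hj, fun hspan => hi (b.mem_span_image.mp hspan (by simpa [lieMatrix] using hx))⟩,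
    i, hx, rfl⟩

noncomputable def jumpSign (J : Set I) (i j : I) : K := J.indicator 1 i - J.indicator 1 j

lemma jumpSign_eq_zero {i j : I} (h : i ∈ J ↔ j ∈ J) : (jumpSign J i j : K) = 0 := by
  by_cases hi : i ∈ J
  · simp [jumpSign, hi, h.mp hi]
  · simp [jumpSign, hi, mt h.mpr hi]

def tripleRotate (I : Type*) : (I × I) × I ≃ (I × I) × I :=
  (Equiv.prodAssoc I I I).trans (Equiv.prodComm I (I × I))

/-- `x_α^β y_β^γ z_γ^α` at `q = ((α, β), γ)`; this grouping lets `finsum_curry` sum out `γ`. -/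
noncomputable def cycleProduct (x y z : L) (q : (I × I) × I) : K :=
  lieMatrix b x q.1.1 q.1.2 * lieMatrix b y q.1.2 q.2 * lieMatrix b z q.2 q.1.1

lemma cycleProduct_tripleRotate (x y z : L) (q : (I × I) × I) :
    cycleProduct b y z x (tripleRotate I q) = cycleProduct b x y z q := by
  simp only [cycleProduct, tripleRotate, Equiv.trans_apply, Equiv.prodAssoc_apply,
    Equiv.prodComm_apply, Prod.fst_swap, Prod.snd_swap]
  ring

lemma finite_cycleProduct_support_last_mem_compl_prod
    (hJ : IsAlmostInvariant L b J) (x y z : L) :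
    {q : (I × I) × I | (q.2, q.1.1) ∈ Jᶜ ×ˢ J ∧ cycleProduct b x y z q ≠ 0}.Finite := by
  refine ((finite_lieMatrix_support_compl_prod b J hJ z).biUnion fun p _ =>
    (hasFiniteSupport_lieMatrix_col b y p.1).image fun β => ((p.2, β), p.1)).subset ?_
  rintro ⟨⟨α, β⟩, γ⟩ ⟨hγα, hq⟩
  simp only [cycleProduct, ne_eq, mul_eq_zero, not_or] at hq
  simp only [Set.mem_iUnion]
  exact ⟨(γ, α), ⟨hγα, hq.2⟩, β, hq.1.2, rfl⟩

/-- Going around a triple that meets both `J` and `Jᶜ`, some factor of the cycle product is an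
entry of the block `Jᶜ ×ˢ J`, which has finite support. -/
lemma hasFiniteSupport_mul_cycleProduct
    (hJ : IsAlmostInvariant L b J) (x y z : L)
    {w : (I × I) × I → K}
    (hw : ∀ q, (q.1.1 ∈ J ↔ q.1.2 ∈ J) → (q.1.2 ∈ J ↔ q.2 ∈ J) → w q = 0) :
    HasFiniteSupport fun q => w q * cycleProduct b x y z q := by
  have rot := (tripleRotate I).injective
  refine ((finite_cycleProduct_support_last_mem_compl_prod b J hJ x y z).union
    (((finite_cycleProduct_support_last_mem_compl_prod b J hJ y z x).preimage rot.injOn).union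
      ((finite_cycleProduct_support_last_mem_compl_prod b J hJ z x y).preimage
        (rot.comp rot).injOn))).subset ?_
  rintro ⟨⟨α, β⟩, γ⟩ hq
  have hcyc := right_ne_zero_of_mul hq
  have hmixed : ¬((α ∈ J ↔ β ∈ J) ∧ (β ∈ J ↔ γ ∈ J)) := fun h =>
    left_ne_zero_of_mul hq (hw _ h.1 h.2)
  have hrot := cycleProduct_tripleRotate b x y z ((α, β), γ)
  have hrot2 := cycleProduct_tripleRotate b y z x ((β, γ), α)
  by_cases hα : α ∈ J <;> by_cases hβ : β ∈ J <;> by_cases hγ : γ ∈ J <;>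
    simp_all [tripleRotate]

lemma hasFiniteSupport_jumpSign_mul_cycleProduct
    (hJ : IsAlmostInvariant L b J) (x y z : L) :
    HasFiniteSupport fun q => jumpSign J q.1.1 q.1.2 * cycleProduct b x y z q :=
  hasFiniteSupport_mul_cycleProduct b J hJ x y z fun _ h _ => jumpSign_eq_zero J h

noncomputable def cycleSum (x y z : L) : K :=
  ∑ᶠ q, jumpSign J q.1.1 q.1.2 * cycleProduct b x y z q

lemma cycleSum_add_cycleSum_add_cycleSum
    (hJ : IsAlmostInvariant L b J) (x y z : L) :
    cycleSum b J x y z + cycleSum b J y z x + cycleSum b J z x y = 0 := by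
  have hxyz := hasFiniteSupport_jumpSign_mul_cycleProduct b J hJ x y z
  have hyzx : HasFiniteSupport fun q => jumpSign J q.1.2 q.2 * cycleProduct b x y z q :=
    hasFiniteSupport_mul_cycleProduct b J hJ x y z fun _ _ h => jumpSign_eq_zero J h
  have hzxy : HasFiniteSupport fun q => jumpSign J q.2 q.1.1 * cycleProduct b x y z q :=
    hasFiniteSupport_mul_cycleProduct b J hJ x y z fun _ h h' => jumpSign_eq_zero J (h.trans h').symm
  have cycleSum_yzx : cycleSum b J y z x = ∑ᶠ q, jumpSign J q.1.2 q.2 * cycleProduct b x y z q := by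
    rw [cycleSum, ← finsum_comp_equiv (tripleRotate I)]
    simp only [cycleProduct_tripleRotate]
    rfl
  have cycleSum_zxy : cycleSum b J z x y = ∑ᶠ q, jumpSign J q.2 q.1.1 * cycleProduct b x y z q := by
    rw [cycleSum, ← finsum_comp_equiv ((tripleRotate I).trans (tripleRotate I))]
    simp only [Equiv.trans_apply, cycleProduct_tripleRotate]
    rfl
  rw [cycleSum_yzx, cycleSum_zxy, cycleSum, ← finsum_add_distrib hxyz hyzx,
    ← finsum_add_distrib (hxyz.fun_add hyzx) hzxy]
  refine finsum_eq_zero_of_forall_eq_zero fun q => ?_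
  simp only [jumpSign]
  ring

variable [LieAlgebra K L] [LieModule K L W]

lemma repr_lie_eq_finsum (x : L) (v : W) (i : I) :
    b.repr ⁅x, v⁆ i = ∑ᶠ k, lieMatrix b x i k * b.repr v k := by
  conv_lhs => rw [← b.linearCombination_repr v, Finsupp.linearCombination_apply, Finsupp.sum,
    lie_sum]
  rw [finsum_eq_sum_of_support_subset _ (s := (b.repr v).support) fun k hk => ?_]
  · simp [lieMatrix, Finsupp.finsetSum_apply, mul_comm]
  · exact Finsupp.mem_support_iff.mpr (right_ne_zero_of_mul hk)

lemma lieMatrix_lie (y z : L) (i j : I) :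
    lieMatrix b ⁅y, z⁆ i j = ∑ᶠ k, (lieMatrix b y i k * lieMatrix b z k j
      - lieMatrix b z i k * lieMatrix b y k j) := by
  rw [finsum_sub_distrib ((hasFiniteSupport_lieMatrix_col b z j).fun_mul_right _)
    ((hasFiniteSupport_lieMatrix_col b y j).fun_mul_right _)]
  show b.repr ⁅⁅y, z⁆, b j⁆ i = _
  rw [lie_lie, map_sub, Finsupp.sub_apply, repr_lie_eq_finsum, repr_lie_eq_finsum]
  rfl

lemma fockCocycle_eq_finsum
    (hJ : IsAlmostInvariant L b J) (x y : L) :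
    fockCocycle b J x y
      = ∑ᶠ p : I × I, jumpSign J p.1 p.2 * (lieMatrix b x p.1 p.2 * lieMatrix b y p.2 p.1) := by
  classical
  unfold fockCocycle
  rw [← finsum_sub_distrib]
  · refine finsum_congr fun p => ?_
    by_cases hi : p.1 ∈ J <;> by_cases hj : p.2 ∈ J <;> simp [jumpSign, lieMatrix, hi, hj]
  · refine ((finite_lieMatrix_support_compl_prod b J hJ y).preimage
      Prod.swap_injective.injOn).subset fun p hp => ?_
    obtain ⟨⟨hp1, hp2⟩, hp⟩ := ite_ne_right_iff.mp hp
    exact ⟨⟨hp2, hp1⟩, right_ne_zero_of_mul hp⟩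
  · refine (finite_lieMatrix_support_compl_prod b J hJ x).subset fun p hp => ?_
    obtain ⟨hp1p2, hp⟩ := ite_ne_right_iff.mp hp
    exact ⟨hp1p2, left_ne_zero_of_mul hp⟩

lemma fockCocycle_eq_neg_swap
    (hJ : IsAlmostInvariant L b J) (x y : L) :
    fockCocycle b J x y = -fockCocycle b J y x := by
  rw [fockCocycle_eq_finsum b J hJ, fockCocycle_eq_finsum b J hJ, ← finsum_neg_distrib]
  refine (finsum_comp_equiv (Equiv.prodComm I I)).symm.trans (finsum_congr fun p => ?_)
  simp only [Equiv.prodComm_apply, Prod.fst_swap, Prod.snd_swap, jumpSign]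
  ring

lemma fockCocycle_lie_eq
    (hJ : IsAlmostInvariant L b J) (x y z : L) :
    fockCocycle b J x ⁅y, z⁆ = cycleSum b J x y z - cycleSum b J x z y := by
  have hxyz := hasFiniteSupport_jumpSign_mul_cycleProduct b J hJ x y z
  have hxzy := hasFiniteSupport_jumpSign_mul_cycleProduct b J hJ x z y
  rw [fockCocycle_eq_finsum b J hJ, cycleSum, cycleSum, ← finsum_sub_distrib hxyz hxzy]
  refine ((finsum_curry _ (hxyz.fun_sub hxzy)).trans (finsum_congr fun p => ?_)).symm
  rw [lieMatrix_lie, mul_finsum, mul_finsum]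
  refine finsum_congr fun γ => ?_
  simp only [cycleProduct]
  ring

end FockCocycle

theorem stmt1_general (K : Type*) [Field K]
    (L : Type*) [LieRing L] [LieAlgebra K L]
    (W : Type*) [AddCommGroup W] [Module K W] [LieRingModule L W] [LieModule K L W]
    (I : Type*) (b : Module.Basis I K W) (J : Set I)
    (hJ : ∀ x : L, {α ∈ J | ⁅x, b α⁆ ∉ Submodule.span K (⇑b '' J)}.Finite) :
    (∀ x y : L, fockCocycle b J x y = - fockCocycle b J y x) ∧
    (∀ x y z : L,
      fockCocycle b J x ⁅y, z⁆ + fockCocycle b J y ⁅z, x⁆ + fockCocycle b J z ⁅x, y⁆ = 0) := by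
  refine ⟨fockCocycle_eq_neg_swap b J hJ, fun x y z => ?_⟩
  rw [fockCocycle_lie_eq b J hJ, fockCocycle_lie_eq b J hJ, fockCocycle_lie_eq b J hJ]
  linear_combination cycleSum_add_cycleSum_add_cycleSum b J hJ x y z
    - cycleSum_add_cycleSum_add_cycleSum b J hJ x z y

/-- `c` is a Lie algebra 2-cocycle on `𝔤` with values in `K`:
`c(x,y) = −c(y,x)` and `c(x,[y,z]) + c(y,[z,x]) + c(z,[x,y]) = 0`. -/
theorem stmt1 (K : Type*) [Field K] [CharZero K]
    (L : Type*) [LieRing L] [LieAlgebra K L]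
    (W : Type*) [AddCommGroup W] [Module K W] [LieRingModule L W] [LieModule K L W]
    (I : Type*) (b : Module.Basis I K W) (J : Set I)
    (hJ : ∀ x : L, {α ∈ J | ⁅x, b α⁆ ∉ Submodule.span K (⇑b '' J)}.Finite) :
    (∀ x y : L, fockCocycle b J x y = - fockCocycle b J y x) ∧
    (∀ x y z : L,
      fockCocycle b J x ⁅y, z⁆ + fockCocycle b J y ⁅z, x⁆ + fockCocycle b J z ⁅x, y⁆ = 0) :=
  stmt1_general K L W I b J hJ
end

section
/- For all natural numbers m, ℓ, s: Σ_{b=0}^{m−1} (b−m)_ℓ · (b)_s = (−1)^ℓ · ℓ! · s! · binom(m+ℓ, m−s−1), an identity of integers. -/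
/-!
Write `m = s + n + 1` (for `m ≤ s` both sides vanish). With `b = s + i` and `i + j = n`,
one has `(b)_s = s! C(s+i, s)` and `(b-m)_ℓ = (-1)^ℓ ℓ! C(ℓ+j, ℓ)`, so the sum is
`(-1)^ℓ ℓ! s!` times the convolution `∑_{i+j=n} C(s+i, s) C(ℓ+j, ℓ)`. This is the coefficient
of `X^n` in `(1-X)^{-(s+1)} (1-X)^{-(ℓ+1)} = (1-X)^{-(s+ℓ+2)}`, namely `C(s+ℓ+1+n, n) = C(m+ℓ, m-s-1)`.
-/

/-- The falling factorial `(a)_k = a(a−1)⋯(a−k+1)` for `a : ℤ`, with `(a)_0 = 1`. -/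
def fallFact (a : ℤ) (k : ℕ) : ℤ := ∏ i ∈ Finset.range k, (a - i)

/-- `binom(n,b)` for `n : ℕ` and `b : ℤ`: the usual binomial coefficient,
equal to `0` when `b < 0` or `b > n`. -/
def natIntBinom (n : ℕ) (b : ℤ) : ℤ := if 0 ≤ b then (n.choose b.toNat : ℤ) else 0

open Finset Nat Polynomial

theorem Nat.sum_antidiagonal_add_choose_mul_add_choose (a b n : ℕ) :
    ∑ ij ∈ antidiagonal n, (a + ij.1).choose a * (b + ij.2).choose b
      = (a + b + 1 + n).choose n := by
  have h := congrArg (fun f => PowerSeries.coeff n f.val)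
    (PowerSeries.invOneSubPow_add ℤ (a + 1) (b + 1))
  rw [show a + 1 + (b + 1) = a + b + 1 + 1 by ring] at h
  simp only [Units.val_mul, PowerSeries.coeff_mul,
    PowerSeries.invOneSubPow_val_succ_eq_mk_add_choose, PowerSeries.coeff_mk] at h
  rw [← choose_symm_add]
  exact_mod_cast h.symm

theorem fallFact_eq_eval_descPochhammer (a : ℤ) (k : ℕ) :
    fallFact a k = (descPochhammer ℤ k).eval a :=
  (descPochhammer_eval_eq_prod_range k a).symm

theorem fallFact_natCast (n k : ℕ) : fallFact n k = k ! * n.choose k := by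
  rw [fallFact_eq_eval_descPochhammer, descPochhammer_eval_eq_descFactorial,
    descFactorial_eq_factorial_mul_choose]
  push_cast; rfl

theorem fallFact_neg_natCast_succ (n k : ℕ) :
    fallFact (-(n + 1 : ℕ)) k = (-1) ^ k * (k ! * (n + k).choose k) := by
  have h := ascPochhammer_eval_neg_eq_descPochhammer ℤ (-((n + 1 : ℕ) : ℤ)) k
  rw [neg_neg, ascPochhammer_nat_eq_natCast_ascFactorial, ascFactorial_eq_factorial_mul_choose] at h
  rw [fallFact_eq_eval_descPochhammer, ← Nat.cast_mul, h, ← mul_assoc, ← mul_pow]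
  norm_num

theorem sum_Icc_zero_sub_one_eq_sum_range {M : Type*} [AddCommMonoid M] (f : ℤ → M) (m : ℕ) :
    ∑ b ∈ Icc (0 : ℤ) (m - 1), f b = ∑ i ∈ range m, f i := by
  rw [Int.Icc_eq_finset_map, sum_map]
  simp

theorem natIntBinom_natCast (n k : ℕ) : natIntBinom n k = n.choose k := by
  simp [natIntBinom]

theorem natIntBinom_of_neg (n : ℕ) {b : ℤ} (hb : b < 0) : natIntBinom n b = 0 :=
  if_neg hb.not_ge

theorem fallFact_natCast_of_lt {n k : ℕ} (h : n < k) : fallFact n k = 0 := by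
  simp [fallFact_natCast, choose_eq_zero_of_lt h]

/-- for all natural numbers `m, ℓ, s`:
`Σ_{b=0}^{m−1} (b−m)_ℓ (b)_s = (−1)^ℓ ℓ! s! binom(m+ℓ, m−s−1)`. -/
theorem stmt9 (m ℓ s : ℕ) :
    ∑ b ∈ Finset.Icc (0 : ℤ) ((m : ℤ) - 1), fallFact (b - m) ℓ * fallFact b s
      = (-1) ^ ℓ * (ℓ.factorial : ℤ) * (s.factorial : ℤ)
        * natIntBinom (m + ℓ) ((m : ℤ) - s - 1) := by
  rw [sum_Icc_zero_sub_one_eq_sum_range]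
  rcases le_or_gt m s with hms | hsm
  · rw [natIntBinom_of_neg _ (by omega), mul_zero]
    exact sum_eq_zero fun i hi => by
      rw [fallFact_natCast_of_lt (by simp at hi; omega), mul_zero]
  obtain ⟨n, rfl⟩ := Nat.exists_eq_add_of_lt hsm
  calc ∑ i ∈ range (s + n + 1), fallFact (i - (s + n + 1 : ℕ)) ℓ * fallFact i s
      = ∑ ij ∈ antidiagonal n,
          fallFact (-(ij.2 + 1 : ℕ)) ℓ * fallFact (s + ij.1 : ℕ) s := by
        rw [add_assoc, sum_range_add,
          sum_eq_zero fun i hi => by rw [fallFact_natCast_of_lt (by simpa using hi), mul_zero],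
          zero_add, Nat.sum_antidiagonal_eq_sum_range_succ fun i j =>
            fallFact (-(j + 1 : ℕ)) ℓ * fallFact (s + i : ℕ) s]
        refine sum_congr rfl fun i hi => ?_
        rw [mem_range_succ_iff] at hi
        congr 2
        push_cast [hi]
        ring
    _ = (-1) ^ ℓ * ℓ ! * s !
          * ↑(∑ ij ∈ antidiagonal n, (s + ij.1).choose s * (ℓ + ij.2).choose ℓ) := by
        rw [Nat.cast_sum, mul_sum]
        refine sum_congr rfl fun ij _ => ?_
        rw [fallFact_neg_natCast_succ, fallFact_natCast, add_comm ij.2]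
        push_cast
        ring
    _ = _ := by
        rw [Nat.sum_antidiagonal_add_choose_mul_add_choose,
          show ((s + n + 1 : ℕ) : ℤ) - s - 1 = (n : ℕ) by push_cast; ring,
          natIntBinom_natCast,
          show s + n + 1 + ℓ = s + ℓ + 1 + n by ring]
end

section
/- For every integer r and all natural numbers ℓ, s with r ≤ s: Σ_{b=0}^{s−r−1} (b+r−s)_ℓ · (b)_s = (−1)^{s+1} · ℓ! · s! · binom(r, s+ℓ+1), an identity of integers. -/
/-- The generalized binomial coefficient `binom(a,k) = (a)_k / k! ∈ ℤ`
for `a : ℤ` and `k : ℕ` (the division is exact). -/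
def intBinom (a : ℤ) (k : ℕ) : ℤ := fallFact a k / (k.factorial : ℤ)

open Finset

theorem Nat.sum_antidiagonal_choose_mul_add_choose (ℓ : ℕ) :
    ∀ s N : ℕ, ∑ ij ∈ antidiagonal N, ij.1.choose s * (ij.2 + ℓ).choose ℓ
      = (N + ℓ + 1).choose (s + ℓ + 1)
  | 0, N => by
    simpa [add_comm, add_right_comm] using sum_antidiagonal_choose_add ℓ N
  | s + 1, 0 => by simp [Nat.choose_eq_zero_of_lt]
  | s + 1, N + 1 => by
    have pascal : ∀ ij ∈ antidiagonal N, (ij.1 + 1).choose (s + 1) * (ij.2 + ℓ).choose ℓ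
        = ij.1.choose s * (ij.2 + ℓ).choose ℓ + ij.1.choose (s + 1) * (ij.2 + ℓ).choose ℓ :=
      fun ij _ => by rw [Nat.choose_succ_succ', add_mul]
    rw [Nat.sum_antidiagonal_succ, Nat.choose_zero_succ, zero_mul, zero_add, sum_congr rfl pascal,
      sum_add_distrib, Nat.sum_antidiagonal_choose_mul_add_choose ℓ s N,
      Nat.sum_antidiagonal_choose_mul_add_choose ℓ (s + 1) N,
      show N + 1 + ℓ + 1 = (N + ℓ + 1) + 1 by ring, show s + 1 + ℓ + 1 = (s + ℓ + 1) + 1 by ring,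
      Nat.choose_succ_succ' (N + ℓ + 1)]

theorem fallFact_eq_factorial_mul_choose (a : ℤ) (k : ℕ) :
    fallFact a k = k.factorial * Ring.choose a k := by
  rw [fallFact, ← descPochhammer_eval_eq_prod_range, Polynomial.eval_eq_smeval,
    Ring.descPochhammer_eq_factorial_smul_choose, nsmul_eq_mul]

theorem intBinom_eq_choose (a : ℤ) (k : ℕ) : intBinom a k = Ring.choose a k := by
  rw [intBinom, fallFact_eq_factorial_mul_choose,
    Int.mul_ediv_cancel_left _ (mod_cast k.factorial_ne_zero)]

theorem Int.choose_neg (a : ℤ) (k : ℕ) :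
    Ring.choose (-a) k = (-1) ^ k * Ring.choose (a + k - 1) k := by
  rw [Ring.choose_neg, Units.smul_def, Int.coe_negOnePow_natCast, smul_eq_mul]

theorem Int.sum_Icc_zero_natCast {M : Type*} [AddCommMonoid M] (f : ℤ → M) (N : ℕ) :
    ∑ b ∈ Icc (0 : ℤ) N, f b = ∑ b ∈ Finset.range (N + 1), f b := by
  rw [Int.Icc_eq_finset_map, sum_map]
  simp

theorem sum_range_choose_sub_mul_choose (N s ℓ : ℕ) :
    ∑ b ∈ range (N + 1), Ring.choose ((b : ℤ) - N - 1) ℓ * Ring.choose (b : ℤ) s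
      = (-1) ^ ℓ * (N + ℓ + 1).choose (s + ℓ + 1) := by
  have upper_neg : ∀ b ∈ range (N + 1), Ring.choose ((b : ℤ) - N - 1) ℓ * Ring.choose (b : ℤ) s
      = (-1) ^ ℓ * ((b.choose s * (N - b + ℓ).choose ℓ : ℕ) : ℤ) := by
    intro b hb
    have hbN : b ≤ N := Nat.lt_succ_iff.mp (mem_range.mp hb)
    rw [show (b : ℤ) - N - 1 = -((N - b : ℕ) + 1) by push_cast [hbN]; ring, Int.choose_neg,
      show ((N - b : ℕ) : ℤ) + 1 + ℓ - 1 = (N - b + ℓ : ℕ) by push_cast; ring,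
      Ring.choose_natCast, Ring.choose_natCast]
    push_cast
    ring
  rw [sum_congr rfl upper_neg, ← mul_sum, ← Nat.cast_sum,
    ← Nat.sum_antidiagonal_eq_sum_range_succ (fun i j => i.choose s * (j + ℓ).choose ℓ),
    Nat.sum_antidiagonal_choose_mul_add_choose]

/-- for every integer `r` and all naturals `ℓ, s` with `r ≤ s`:
`Σ_{b=0}^{s−r−1} (b+r−s)_ℓ (b)_s = (−1)^{s+1} ℓ! s! binom(r, s+ℓ+1)`. -/
theorem stmt11 (r : ℤ) (ℓ s : ℕ) (h : r ≤ (s : ℤ)) :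
    ∑ b ∈ Finset.Icc (0 : ℤ) ((s : ℤ) - r - 1), fallFact (b + r - s) ℓ * fallFact b s
      = (-1) ^ (s + 1) * (ℓ.factorial : ℤ) * (s.factorial : ℤ) * intBinom r (s + ℓ + 1) := by
  rcases h.eq_or_lt with rfl | h
  · rw [intBinom_eq_choose, Ring.choose_natCast, Nat.choose_eq_zero_of_lt (by omega)]
    simp
  obtain ⟨N, rfl⟩ : ∃ N : ℕ, r = s - N - 1 := ⟨(s - r - 1).toNat, by omega⟩
  have lhs : ∀ b ∈ range (N + 1), fallFact ((b : ℤ) + (s - N - 1) - s) ℓ * fallFact b s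
      = ℓ.factorial * s.factorial * (Ring.choose ((b : ℤ) - N - 1) ℓ * Ring.choose (b : ℤ) s) := by
    intro b _
    rw [show (b : ℤ) + (s - N - 1) - s = b - N - 1 by ring, fallFact_eq_factorial_mul_choose,
      fallFact_eq_factorial_mul_choose]
    ring
  have rhs : intBinom (s - N - 1) (s + ℓ + 1)
      = (-1) ^ (s + ℓ + 1) * (N + ℓ + 1).choose (s + ℓ + 1) := by
    rw [intBinom_eq_choose, show (s : ℤ) - N - 1 = -(N + 1 - s) by ring, Int.choose_neg,
      show (N : ℤ) + 1 - s + (s + ℓ + 1 : ℕ) - 1 = (N + ℓ + 1 : ℕ) by push_cast; ring,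
      Ring.choose_natCast]
  have sign : (-1 : ℤ) ^ (s + 1) * (-1) ^ (s + ℓ + 1) = (-1) ^ ℓ := by
    rw [← pow_add, show s + 1 + (s + ℓ + 1) = ℓ + 2 * (s + 1) by ring, pow_add, pow_mul]
    norm_num
  rw [show (s : ℤ) - (s - N - 1) - 1 = N by ring, Int.sum_Icc_zero_natCast, sum_congr rfl lhs,
    ← mul_sum, sum_range_choose_sub_mul_choose, rhs, ← sign]
  ring
end

section
/- Let K be a field of characteristic 0. For all integers m, n: Σ over pairs (i,j) ∈ ℤ×ℤ with i ≥ 0, j < 0, i = m+j and j = n+i of the product i·j, minus the same sum over pairs with i < 0, j ≥ 0, i = m+j and j = n+i, equals (m − m³)/6 in K if m + n = 0 and equals 0 otherwise (both sums have finitely many nonzero terms). -/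
/-! The constraints `i = m + j`, `j = n + i` force `m + n = 0` and `j = i - m`, so both sums run
over the graph of `i ↦ i - m`: the first over `0 ≤ i < m`, the second over `m ≤ i < 0`.
The summand `i (i - m)` is the forward difference of the cubic
`φ x = x (x - 1) (2x - 1) / 6 - m x (x - 1) / 2`, and whichever of the two ranges is nonempty,
the signed difference of the sums telescopes to `φ m - φ 0 = (m - m³) / 6`. -/

open Finset

namespace Int

variable {M : Type*} [AddCommGroup M] (f : ℤ → M)

theorem sum_Ico_sub {a b : ℤ} (hab : a ≤ b) : ∑ i ∈ Ico a b, (f (i + 1) - f i) = f b - f a := by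
  induction b, hab using Int.leInduction with
  | base => simp
  | succ b hab ih =>
    rw [← insert_Ico_right_eq_Ico_add_one hab, sum_insert right_notMem_Ico, ih]
    abel

theorem sum_Ico_sub_sub_sum_Ico_sub (a b : ℤ) :
    ∑ i ∈ Ico a b, (f (i + 1) - f i) - ∑ i ∈ Ico b a, (f (i + 1) - f i) = f b - f a := by
  rcases le_total a b with hab | hba
  · rw [sum_Ico_sub f hab, Ico_eq_empty_of_le hab, sum_empty, sub_zero]
  · rw [sum_Ico_sub f hba, Ico_eq_empty_of_le hba, sum_empty, zero_sub, neg_sub]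

end Int

theorem finsum_ite_graph {α β M : Type*} [AddCommMonoid M] (s : Finset α) (g : α → β)
    (P : α × β → Prop) [DecidablePred P] (F : α × β → M)
    (hP : ∀ p, P p ↔ p.1 ∈ s ∧ p.2 = g p.1) :
    ∑ᶠ p, (if P p then F p else 0) = ∑ a ∈ s, F (a, g a) := by
  classical
  have hgraph : (fun p => if P p then F p else 0) = Set.indicator ((fun a => (a, g a)) '' s) F := by
    ext ⟨a, b⟩
    rw [Set.indicator_apply]
    congr 1
    simp only [hP, Set.mem_image, mem_coe, Prod.mk.injEq]
    grind
  rw [hgraph, ← finsum_mem_def, finsum_mem_image fun _ _ _ _ h => congrArg Prod.fst h,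
    finsum_mem_coe_finset]

/-- for all integers `m, n`, the sum over pairs `(i,j) ∈ ℤ×ℤ` with
`i ≥ 0`, `j < 0`, `i = m+j`, `j = n+i` of `i·j`, minus the same sum over pairs
with `i < 0`, `j ≥ 0`, `i = m+j`, `j = n+i`, equals `(m − m³)/6` in `K` if
`m + n = 0` and `0` otherwise (both sums have finitely many nonzero terms and
are taken as `finsum`s). -/
theorem stmt14 (K : Type*) [Field K] [CharZero K] (m n : ℤ) :
    (∑ᶠ p : ℤ × ℤ, if 0 ≤ p.1 ∧ p.2 < 0 ∧ p.1 = m + p.2 ∧ p.2 = n + p.1 then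
        ((p.1 : K) * (p.2 : K)) else 0)
    - (∑ᶠ p : ℤ × ℤ, if p.1 < 0 ∧ 0 ≤ p.2 ∧ p.1 = m + p.2 ∧ p.2 = n + p.1 then
        ((p.1 : K) * (p.2 : K)) else 0)
    = if m + n = 0 then ((m : K) - (m : K) ^ 3) / 6 else 0 := by
  by_cases h : m + n = 0
  · obtain rfl : n = -m := by omega
    let φ : ℤ → K := fun x => x * (x - 1) * (2 * x - 1) / 6 - m * x * (x - 1) / 2
    have hφ : ∀ i : ℤ, (i : K) * ((i - m : ℤ) : K) = φ (i + 1) - φ i := by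
      intro i
      simp only [φ]
      push_cast
      field_simp
      ring
    rw [finsum_ite_graph (Ico 0 m) (· - m) _ _ (fun p => by simp only [mem_Ico]; omega),
      finsum_ite_graph (Ico m 0) (· - m) _ _ (fun p => by simp only [mem_Ico]; omega)]
    simp only [hφ]
    rw [Int.sum_Ico_sub_sub_sum_Ico_sub, if_pos h]
    simp only [φ]
    push_cast
    ring
  · have hempty : ∀ p : ℤ × ℤ, ¬ (p.1 = m + p.2 ∧ p.2 = n + p.1) := fun p hp => h (by omega)
    simp [hempty, if_neg h]
end

section
/- Let K be a field of characteristic 0 and define c : ℤ × ℤ → K by c(m,n) = (m − m³)/6 if m + n = 0 and c(m,n) = 0 otherwise. Then for all integers m, n, p: c(m,n) = −c(n,m) and (m−n)·c(m+n, p) + (n−p)·c(n+p, m) + (p−m)·c(p+m, n) = 0. -/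
/-- The Virasoro 2-cocycle `c(m,n) = δ_{m+n,0}·(m−m³)/6` on the Witt algebra
(in the basis `{L_m}_{m∈ℤ}` with `[L_m, L_n] = (m−n) L_{m+n}`). -/
noncomputable def virasoroCocycle (K : Type*) [Field K] [CharZero K] (m n : ℤ) : K :=
  if m + n = 0 then ((m : K) - (m : K) ^ 3) / 6 else 0

/-!
Both identities are trivial unless the indices sum to zero. On the hyperplane `m + n + p = 0`
every term is a polynomial in `m` and `n`: antisymmetry is the oddness of `x - x³`, and the
cyclic sum is a polynomial identity.
-/

namespace virasoroCocycle

variable {K : Type*} [Field K] [CharZero K]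

theorem of_add_eq_zero {m n : ℤ} (h : m + n = 0) :
    virasoroCocycle K m n = ((m : K) - (m : K) ^ 3) / 6 :=
  if_pos h

theorem of_add_ne_zero {m n : ℤ} (h : m + n ≠ 0) : virasoroCocycle K m n = 0 :=
  if_neg h

theorem antisymm (m n : ℤ) : virasoroCocycle K m n = -virasoroCocycle K n m := by
  by_cases h : m + n = 0
  · obtain rfl : n = -m := by omega
    rw [of_add_eq_zero h, of_add_eq_zero (by omega)]
    push_cast
    ring
  · rw [of_add_ne_zero h, of_add_ne_zero (by omega), neg_zero]

theorem cyclic_sum_eq_zero (m n p : ℤ) :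
    ((m : K) - n) * virasoroCocycle K (m + n) p
      + ((n : K) - p) * virasoroCocycle K (n + p) m
      + ((p : K) - m) * virasoroCocycle K (p + m) n = 0 := by
  by_cases h : m + n + p = 0
  · obtain rfl : p = -(m + n) := by omega
    rw [of_add_eq_zero (by omega), of_add_eq_zero (by omega), of_add_eq_zero (by omega)]
    push_cast
    ring
  · rw [of_add_ne_zero (by omega), of_add_ne_zero (by omega), of_add_ne_zero (by omega)]
    ring

end virasoroCocycle

/-- for all integers `m, n, p`: `c(m,n) = −c(n,m)` and
`(m−n)·c(m+n,p) + (n−p)·c(n+p,m) + (p−m)·c(p+m,n) = 0`, i.e. `c` is a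
2-cocycle on the Witt algebra. -/
theorem stmt15 (K : Type*) [Field K] [CharZero K] (m n p : ℤ) :
    virasoroCocycle K m n = - virasoroCocycle K n m ∧
    ((m : K) - n) * virasoroCocycle K (m + n) p
      + ((n : K) - p) * virasoroCocycle K (n + p) m
      + ((p : K) - m) * virasoroCocycle K (p + m) n = 0 :=
  ⟨virasoroCocycle.antisymm m n, virasoroCocycle.cyclic_sum_eq_zero m n p⟩
end

section
/- Let K be a field of characteristic 0 and I a finite index set. If U is a K-subspace of the polynomial ring K[X_α : α ∈ I] such that X_α·U ⊆ U and ∂p/∂X_α ∈ U for every p ∈ U and every α ∈ I, then U = {0} or U = K[X_α : α ∈ I]. -/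
/-!
In characteristic zero, a nonconstant polynomial has a partial derivative that is nonzero, and
every partial derivative has strictly smaller total degree. Differentiating a nonzero element of
`U` repeatedly therefore reaches a nonzero constant, so `1 ∈ U`; multiplying by the variables and
by scalars then produces every polynomial.
-/

open MvPolynomial

namespace MvPolynomial

variable {R σ : Type*}

theorem totalDegree_pderiv_lt [CommSemiring R] {p : MvPolynomial σ R} (hp : 0 < p.totalDegree)
    (i : σ) : (pderiv i p).totalDegree < p.totalDegree := by
  refine (Finset.sup_lt_iff (by exact_mod_cast hp)).mpr fun m hm => ?_
  rw [mem_support_iff, coeff_pderiv] at hm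
  have hle := le_totalDegree (mem_support_iff.mpr (left_ne_zero_of_mul hm))
  rw [Finsupp.sum_add_index' (fun _ => rfl) (fun _ _ _ => rfl),
    Finsupp.sum_single_index rfl] at hle
  omega

theorem exists_pderiv_ne_zero [CommSemiring R] [NoZeroDivisors R] [CharZero R]
    {p : MvPolynomial σ R} (hp : p.totalDegree ≠ 0) : ∃ i, pderiv i p ≠ 0 := by
  classical
  obtain ⟨d, hd, i, hi⟩ : ∃ d ∈ p.support, ∃ i, d i ≠ 0 := by
    simpa [totalDegree_eq_zero_iff] using hp
  refine ⟨i, ne_zero_iff.mpr ⟨d - Finsupp.single i 1, ?_⟩⟩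
  have hsingle : Finsupp.single i 1 ≤ d :=
    Finsupp.single_le_iff.mpr (Nat.one_le_iff_ne_zero.mpr hi)
  rw [coeff_pderiv, tsub_add_cancel_of_le hsingle]
  exact mul_ne_zero (mem_support_iff.mp hd) (Nat.cast_add_one_ne_zero _)

theorem exists_C_mem_of_pderiv_mem [CommSemiring R] [NoZeroDivisors R] [CharZero R]
    {S : Set (MvPolynomial σ R)} (hS : ∀ i p, p ∈ S → pderiv i p ∈ S)
    {p : MvPolynomial σ R} (hpS : p ∈ S) (hp : p ≠ 0) : ∃ c ≠ 0, C c ∈ S := by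
  induction hn : p.totalDegree using Nat.strong_induction_on generalizing p with
  | _ n ih =>
    by_cases hdeg : p.totalDegree = 0
    · rw [totalDegree_eq_zero_iff_eq_C.mp hdeg] at hpS hp
      exact ⟨_, fun h => hp (by rw [h, C_0]), hpS⟩
    · obtain ⟨i, hi⟩ := exists_pderiv_ne_zero hdeg
      exact ih _ (hn ▸ totalDegree_pderiv_lt (Nat.pos_of_ne_zero hdeg) i) (hS i p hpS) hi rfl

theorem submodule_eq_top_of_one_mem_of_X_mul_mem [CommSemiring R]
    {U : Submodule R (MvPolynomial σ R)} (hX : ∀ i p, p ∈ U → X i * p ∈ U) (h1 : 1 ∈ U) :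
    U = ⊤ := by
  refine Submodule.eq_top_iff'.mpr fun p => ?_
  induction p using MvPolynomial.induction_on with
  | C a => simpa [smul_eq_C_mul] using U.smul_mem a h1
  | add p q hp hq => exact U.add_mem hp hq
  | mul_X p i hp => rw [mul_comm]; exact hX i p hp

end MvPolynomial

theorem stmt18_general (K : Type*) [Field K] [CharZero K] (I : Type*)
    (U : Submodule K (MvPolynomial I K))
    (hX : ∀ (α : I) (p : MvPolynomial I K), p ∈ U → MvPolynomial.X α * p ∈ U)
    (hD : ∀ (α : I) (p : MvPolynomial I K), p ∈ U → MvPolynomial.pderiv α p ∈ U) :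
    U = ⊥ ∨ U = ⊤ := by
  refine or_iff_not_imp_left.mpr fun hU => ?_
  obtain ⟨p, hpU, hp⟩ := Submodule.exists_mem_ne_zero_of_ne_bot hU
  obtain ⟨c, hc, hcU⟩ := exists_C_mem_of_pderiv_mem (S := U) hD hpU hp
  have hone : (1 : MvPolynomial I K) ∈ U := by
    simpa [smul_eq_C_mul, ← C_mul, inv_mul_cancel₀ hc] using U.smul_mem c⁻¹ hcU
  exact submodule_eq_top_of_one_mem_of_X_mul_mem hX hone

/-- if `U` is a `K`-subspace of the polynomial ring
`K[X_α : α ∈ I]` (with `I` finite, `K` of characteristic 0) that is stable under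
multiplication by every variable `X_α` and under every partial derivative
`∂/∂X_α`, then `U = {0}` or `U = K[X_α : α ∈ I]`. -/
theorem stmt18 (K : Type*) [Field K] [CharZero K] (I : Type*) [Finite I]
    (U : Submodule K (MvPolynomial I K))
    (hX : ∀ (α : I) (p : MvPolynomial I K), p ∈ U → MvPolynomial.X α * p ∈ U)
    (hD : ∀ (α : I) (p : MvPolynomial I K), p ∈ U → MvPolynomial.pderiv α p ∈ U) :
    U = ⊥ ∨ U = ⊤ :=
  stmt18_general K I U hX hD
end

section
/- Let K be a field of characteristic 0 and W a finite-dimensional K-vector space. If U is a K-subspace of the exterior algebra Λ(W) such that w ∧ u ∈ U for every w ∈ W and u ∈ U, and ι_λ(u) ∈ U for every λ ∈ W* and u ∈ U (where ι_λ denotes left contraction/interior multiplication by the linear functional λ), then U = {0} or U = Λ(W). -/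
/-! Contraction maps `⋀^(k+1) W` into `⋀^k W`, and in characteristic `0` a nonzero `x ∈ ⋀^n W`
with `n > 0` has a nonzero contraction, by the Euler identity `∑ᵢ eᵢ ∧ ι_{eᵢ*} x = n • x`.
Contracting the top-degree component of a nonzero `u ∈ U` again and again therefore produces a
nonzero scalar in `U`, so `1 ∈ U`, and then closure under `w ∧ ·` gives everything. -/

open CliffordAlgebra DirectSum

theorem GradedAlgebra.exists_maximal_proj_ne_zero {R A : Type*} [CommSemiring R] [Semiring A]
    [Algebra R A] (𝒜 : ℕ → Submodule R A) [GradedAlgebra 𝒜] {x : A} (hx : x ≠ 0) :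
    ∃ n, GradedAlgebra.proj 𝒜 n x ≠ 0 ∧ ∀ m, n < m → GradedAlgebra.proj 𝒜 m x = 0 := by
  classical
  have hsupp : (decompose 𝒜 x).support.Nonempty := by
    rw [Finset.nonempty_iff_ne_empty, Ne, DFinsupp.support_eq_empty]
    exact fun h => hx ((decompose 𝒜).injective (h.trans (decompose_zero 𝒜).symm))
  refine ⟨_, (GradedAlgebra.mem_support_iff 𝒜 x _).mp ((decompose 𝒜 x).support.max'_mem hsupp),
    fun m hm => ?_⟩
  by_contra h
  exact hm.not_ge (Finset.le_max' _ m ((GradedAlgebra.mem_support_iff 𝒜 x m).mpr h))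

theorem GradedAlgebra.mem_of_proj_eq_zero {R A : Type*} [CommSemiring R] [Semiring A]
    [Algebra R A] (𝒜 : ℕ → Submodule R A) [GradedAlgebra 𝒜] {x : A} {n : ℕ}
    (h : ∀ m, m ≠ n → GradedAlgebra.proj 𝒜 m x = 0) : x ∈ 𝒜 n := by
  classical
  rw [← sum_support_decompose 𝒜 x]
  refine Submodule.sum_mem _ fun m _ => ?_
  by_cases hm : m = n
  · subst hm; exact (decompose 𝒜 x m).2
  · rw [← GradedAlgebra.proj_apply, h m hm]; exact zero_mem _

theorem CliffordAlgebra.eq_top_of_one_mem_of_ι_mul_mem {R M : Type*} [CommRing R] [AddCommGroup M]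
    [Module R M] {Q : QuadraticForm R M} {U : Submodule R (CliffordAlgebra Q)} (h1 : 1 ∈ U)
    (hι : ∀ m x, x ∈ U → ι Q m * x ∈ U) : U = ⊤ := by
  refine Submodule.eq_top_iff'.mpr fun x => ?_
  induction x using CliffordAlgebra.left_induction with
  | algebraMap r => simpa [Algebra.algebraMap_eq_smul_one] using U.smul_mem r h1
  | add x y hx hy => exact U.add_mem hx hy
  | ι_mul x m hx => exact hι m x hx

namespace ExteriorAlgebra

section CommRing

variable {R M : Type*} [CommRing R] [AddCommGroup M] [Module R M]

local notation "𝒜" => fun i : ℕ => ⋀[R]^i M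

theorem mem_exteriorPower_zero_iff {x : ExteriorAlgebra R M} :
    x ∈ ⋀[R]^0 M ↔ ∃ r, algebraMap R _ r = x := by
  rw [exteriorPower, pow_zero, Submodule.mem_one]

theorem contractLeft_eq_zero_of_mem_exteriorPower_zero (d : Module.Dual R M)
    {x : ExteriorAlgebra R M} (hx : x ∈ ⋀[R]^0 M) : contractLeft d x = 0 := by
  obtain ⟨r, rfl⟩ := mem_exteriorPower_zero_iff.mp hx
  exact contractLeft_algebraMap _ d r

theorem contractLeft_mem_exteriorPower (d : Module.Dual R M) {n : ℕ} {x : ExteriorAlgebra R M}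
    (hx : x ∈ ⋀[R]^n M) : contractLeft d x ∈ ⋀[R]^(n - 1) M := by
  induction hx using Submodule.pow_induction_on_left' with
  | algebraMap r => simp [contractLeft_algebraMap]
  | add x y i _ _ hx hy => rw [map_add]; exact add_mem hx hy
  | mem_mul m hm i x hx ih =>
    obtain ⟨v, rfl⟩ := hm
    rw [contractLeft_ι_mul, Nat.succ_sub_one]
    refine sub_mem (Submodule.smul_mem _ _ hx) ?_
    cases i with
    | zero => simp [contractLeft_eq_zero_of_mem_exteriorPower_zero d hx]
    | succ i => simpa [pow_succ'] using Submodule.mul_mem_mul (LinearMap.mem_range_self _ v) ih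

theorem proj_contractLeft (d : Module.Dual R M) (x : ExteriorAlgebra R M) (k : ℕ) :
    GradedAlgebra.proj 𝒜 k (contractLeft d x) =
      contractLeft d (GradedAlgebra.proj 𝒜 (k + 1) x) := by
  induction x using DirectSum.Decomposition.inductionOn 𝒜 with
  | zero => simp
  | @homogeneous m x =>
    obtain ⟨x, hx⟩ := x
    simp only [GradedAlgebra.proj_apply]
    cases m with
    | zero =>
      rw [contractLeft_eq_zero_of_mem_exteriorPower_zero d hx,
        decompose_of_mem_ne 𝒜 hx k.succ_ne_zero.symm]
      simp
    | succ j =>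
      have hdx := contractLeft_mem_exteriorPower d hx
      rw [Nat.add_sub_cancel] at hdx
      by_cases hk : j = k
      · subst hk
        rw [decompose_of_mem_same 𝒜 hx, decompose_of_mem_same 𝒜 hdx]
      · rw [decompose_of_mem_ne 𝒜 hx (by omega), decompose_of_mem_ne 𝒜 hdx hk, map_zero]
  | add x y hx hy => simp only [map_add, hx, hy]

theorem sum_ι_mul_contractLeft {ι' : Type*} [Fintype ι'] (b : Module.Basis ι' R M) {n : ℕ}
    {x : ExteriorAlgebra R M} (hx : x ∈ ⋀[R]^n M) :
    ∑ i, ι R (b i) * contractLeft (b.coord i) x = n • x := by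
  induction hx using Submodule.pow_induction_on_left' with
  | algebraMap r => simp [contractLeft_algebraMap]
  | add x y i _ _ hx hy => simp only [map_add, mul_add, Finset.sum_add_distrib, hx, hy, smul_add]
  | mem_mul m hm i x hx ih =>
    obtain ⟨v, rfl⟩ := hm
    have hterm (j : ι') : ι R (b j) * contractLeft (b.coord j) (ι R v * x) =
        b.coord j v • (ι R (b j) * x) + ι R v * (ι R (b j) * contractLeft (b.coord j) x) := by
      rw [contractLeft_ι_mul, mul_sub, mul_smul_comm, ← mul_assoc, ← mul_assoc,
        eq_neg_of_add_eq_zero_left (ι_add_mul_swap (b j) v), neg_mul, sub_neg_eq_add]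
    have hexpand : ∑ j, b.coord j v • (ι R (b j) * x) = ι R v * x := by
      simp_rw [← smul_mul_assoc, ← Finset.sum_mul, ← map_smul, ← map_sum,
        Module.Basis.coord_apply, Module.Basis.sum_repr]
    rw [Finset.sum_congr rfl fun j _ => hterm j, Finset.sum_add_distrib, hexpand,
      ← Finset.mul_sum, ih, mul_smul_comm, succ_nsmul', add_comm]

end CommRing

section Field

variable {K W : Type*} [Field K] [CharZero K] [AddCommGroup W] [Module K W] [FiniteDimensional K W]

theorem exists_contractLeft_ne_zero {n : ℕ} (hn : n ≠ 0) {x : ExteriorAlgebra K W}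
    (hx : x ∈ ⋀[K]^n W) (hx0 : x ≠ 0) : ∃ d : Module.Dual K W, contractLeft d x ≠ 0 := by
  by_contra! h
  have hEuler := sum_ι_mul_contractLeft (Module.finBasis K W) hx
  simp only [h, mul_zero, Finset.sum_const_zero] at hEuler
  rw [← Nat.cast_smul_eq_nsmul K, eq_comm, smul_eq_zero, Nat.cast_eq_zero] at hEuler
  exact hEuler.elim hn hx0

local notation "𝒲" => fun i : ℕ => ⋀[K]^i W

theorem one_mem_of_contractLeft_mem {U : Submodule K (ExteriorAlgebra K W)}
    (hC : ∀ (d : Module.Dual K W) u, u ∈ U → contractLeft d u ∈ U) {n : ℕ}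
    {u : ExteriorAlgebra K W} (hu : u ∈ U) (hu0 : GradedAlgebra.proj 𝒲 n u ≠ 0)
    (htop : ∀ m, n < m → GradedAlgebra.proj 𝒲 m u = 0) : 1 ∈ U := by
  induction n generalizing u with
  | zero =>
    obtain ⟨c, rfl⟩ := mem_exteriorPower_zero_iff.mp
      (GradedAlgebra.mem_of_proj_eq_zero 𝒲 fun m hm => htop m (Nat.pos_of_ne_zero hm))
    have hc : c ≠ 0 := by rintro rfl; simp at hu0
    have h1 := U.smul_mem c⁻¹ hu
    rwa [Algebra.smul_def, ← map_mul, inv_mul_cancel₀ hc, map_one] at h1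
  | succ n ih =>
    obtain ⟨d, hd⟩ := exists_contractLeft_ne_zero n.succ_ne_zero
      (SetLike.coe_mem (decompose 𝒲 u (n + 1))) hu0
    refine ih (hC d u hu) ?_ fun m hm => ?_
    · rwa [proj_contractLeft, GradedAlgebra.proj_apply]
    · rw [proj_contractLeft, htop (m + 1) (by omega), map_zero]

end Field

end ExteriorAlgebra

/-- if `U` is a `K`-subspace of the exterior algebra `Λ(W)` of a
finite-dimensional `K`-vector space `W` (`K` of characteristic 0) that is stable
under left exterior multiplication by every `w ∈ W` and under left contraction
`ι_λ` by every linear functional `λ ∈ W*`, then `U = {0}` or `U = Λ(W)`. -/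
theorem stmt19 (K : Type*) [Field K] [CharZero K]
    (W : Type*) [AddCommGroup W] [Module K W] [FiniteDimensional K W]
    (U : Submodule K (ExteriorAlgebra K W))
    (hW : ∀ (w : W) (u : ExteriorAlgebra K W), u ∈ U → ExteriorAlgebra.ι K w * u ∈ U)
    (hC : ∀ (lam : Module.Dual K W) (u : ExteriorAlgebra K W),
      u ∈ U → CliffordAlgebra.contractLeft lam u ∈ U) :
    U = ⊥ ∨ U = ⊤ := by
  refine or_iff_not_imp_left.mpr fun hU => ?_
  obtain ⟨u, hu, hu0⟩ := Submodule.exists_mem_ne_zero_of_ne_bot hU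
  obtain ⟨n, hn, htop⟩ := GradedAlgebra.exists_maximal_proj_ne_zero (fun i => ⋀[K]^i W) hu0
  exact eq_top_of_one_mem_of_ι_mul_mem
    (ExteriorAlgebra.one_mem_of_contractLeft_mem hC hu hn htop) hW
end
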